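/- arXiv:2002.11015 — 3 statements merged into one kernel-verified Lean document; each statement's English description precedes it below -/
import Mathlib

section
/- Let $(M,g)$ be a closed Riemannian manifold and $u$ a smooth solution of $\partial_t u = \mathcal{L}_\phi u$ on $M \times [a,b]$ with $I(t) = \int_M |u|^2 e^{-\phi} > 0$ for all $t$. Define the frequency $U(t) = D(t)/I(t)$ with $D(t) = -\int_M |\nabla u|^2 e^{-\phi}$. Then $U$ is nondecreasing: $U'(t) \geq 0$. -/
/-! Integration by parts turns the frequency into `U = ⟨u, 𝓛u⟩ / ‖u‖²` and the derivative of
its numerator into `2 ‖𝓛u‖²`, so by the quotient rule `U' ‖u‖⁴ = 2 (‖𝓛u‖² ‖u‖² - ⟨u, 𝓛u⟩²)`,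
which is nonnegative by the Cauchy–Schwarz inequality in `L²(μ)`. -/

open MeasureTheory
open scoped RealInnerProductSpace

theorem integral_mul_sq_le_integral_sq_mul_integral_sq {M : Type*} [MeasurableSpace M]
    {μ : Measure M} {f g : M → ℝ} (hf : Integrable (fun x => f x ^ 2) μ)
    (hg : Integrable (fun x => g x ^ 2) μ) (hfg : Integrable (fun x => f x * g x) μ) :
    (∫ x, f x * g x ∂μ) ^ 2 ≤ (∫ x, f x ^ 2 ∂μ) * ∫ x, g x ^ 2 ∂μ := by
  have hquadratic : ∀ s : ℝ, 0 ≤ (∫ x, f x ^ 2 ∂μ) * (s * s)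
      + 2 * (∫ x, f x * g x ∂μ) * s + ∫ x, g x ^ 2 ∂μ := by
    intro s
    have hexpand : ∫ x, (s * f x + g x) ^ 2 ∂μ = (∫ x, f x ^ 2 ∂μ) * (s * s)
        + 2 * (∫ x, f x * g x ∂μ) * s + ∫ x, g x ^ 2 ∂μ := by
      have hpointwise : (fun x => (s * f x + g x) ^ 2)
          = fun x => s ^ 2 * f x ^ 2 + 2 * s * (f x * g x) + g x ^ 2 := by
        funext x; ring
      have hcross : Integrable (fun x => s ^ 2 * f x ^ 2 + 2 * s * (f x * g x)) μ :=
        (hf.const_mul _).add (hfg.const_mul _)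
      rw [hpointwise, integral_add hcross hg, integral_add (hf.const_mul _) (hfg.const_mul _),
        integral_const_mul, integral_const_mul]
      ring
    exact hexpand ▸ integral_nonneg fun x => sq_nonneg _
  have hdiscrim := discrim_le_zero hquadratic
  rw [discrim] at hdiscrim
  linarith

theorem deriv_div_nonneg_of_hasDerivAt {f g : ℝ → ℝ} {f' g' t : ℝ} (hf : HasDerivAt f f' t)
    (hg : HasDerivAt g g' t) (hg_pos : 0 < g t) (h : f t * g' ≤ f' * g t) :
    0 ≤ deriv (f / g) t := by
  rw [(hf.div hg hg_pos.ne').deriv]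
  exact div_nonneg (by linarith) (by positivity)

theorem frequency_monotone_general
    {M : Type*} [MeasurableSpace M] (μ : Measure M)
    {V : Type*} [NormedAddCommGroup V] [InnerProductSpace ℝ V]
    (a b : ℝ)
    (u Lu : ℝ → M → ℝ) (gradu gradLu : ℝ → M → V)
    (hu2 : ∀ t, Integrable (fun x => (u t x) ^ 2) μ)
    (hLu2 : ∀ t, Integrable (fun x => (Lu t x) ^ 2) μ)
    (huLu : ∀ t, Integrable (fun x => u t x * Lu t x) μ)
    -- self-adjointness of 𝓛_φ (integration by parts on the closed manifold)
    (hibp : ∀ t, ∫ x, u t x * Lu t x ∂μ = -∫ x, ‖gradu t x‖ ^ 2 ∂μ)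
    (hibp2 : ∀ t, ∫ x, ⟪gradu t x, gradLu t x⟫ ∂μ = -∫ x, (Lu t x) ^ 2 ∂μ)
    -- differentiation under the integral sign for I and D
    (hDI : ∀ t ∈ Set.Icc a b,
      HasDerivAt (fun s => ∫ x, (u s x) ^ 2 ∂μ)
        (∫ x, 2 * (u t x * Lu t x) ∂μ) t)
    (hDD : ∀ t ∈ Set.Icc a b,
      HasDerivAt (fun s => -∫ x, ‖gradu s x‖ ^ 2 ∂μ)
        (-∫ x, 2 * ⟪gradu t x, gradLu t x⟫ ∂μ) t)
    -- positivity of I on [a,b]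
    (hIpos : ∀ t ∈ Set.Icc a b, 0 < ∫ x, (u t x) ^ 2 ∂μ) :
    ∀ t ∈ Set.Icc a b,
      0 ≤ deriv (fun s =>
        (-∫ x, ‖gradu s x‖ ^ 2 ∂μ) / (∫ x, (u s x) ^ 2 ∂μ)) t := by
  intro t ht
  have hcauchy_schwarz := integral_mul_sq_le_integral_sq_mul_integral_sq (hu2 t) (hLu2 t) (huLu t)
  refine deriv_div_nonneg_of_hasDerivAt (hDD t ht) (hDI t ht) (hIpos t ht) ?_
  rw [integral_const_mul, integral_const_mul, hibp2 t, ← hibp t]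
  nlinarith

theorem frequency_monotone
    {M : Type*} [MeasurableSpace M] (μ : Measure M) [IsFiniteMeasure μ]
    {V : Type*} [NormedAddCommGroup V] [InnerProductSpace ℝ V]
    (a b : ℝ) (hab : a ≤ b)
    (u Lu : ℝ → M → ℝ) (gradu gradLu : ℝ → M → V)
    (hu2 : ∀ t, Integrable (fun x => (u t x) ^ 2) μ)
    (hgrad2 : ∀ t, Integrable (fun x => ‖gradu t x‖ ^ 2) μ)
    (hLu2 : ∀ t, Integrable (fun x => (Lu t x) ^ 2) μ)
    (huLu : ∀ t, Integrable (fun x => u t x * Lu t x) μ)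
    (hgg : ∀ t, Integrable (fun x => ⟪gradu t x, gradLu t x⟫) μ)
    -- the drift heat equation ∂ₜ u = 𝓛_φ u
    (hheat : ∀ x t, HasDerivAt (fun s => u s x) (Lu t x) t)
    -- self-adjointness of 𝓛_φ (integration by parts on the closed manifold)
    (hibp : ∀ t, ∫ x, u t x * Lu t x ∂μ = -∫ x, ‖gradu t x‖ ^ 2 ∂μ)
    (hibp2 : ∀ t, ∫ x, ⟪gradu t x, gradLu t x⟫ ∂μ = -∫ x, (Lu t x) ^ 2 ∂μ)
    -- differentiation under the integral sign for I and D
    (hDI : ∀ t ∈ Set.Icc a b,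
      HasDerivAt (fun s => ∫ x, (u s x) ^ 2 ∂μ)
        (∫ x, 2 * (u t x * Lu t x) ∂μ) t)
    (hDD : ∀ t ∈ Set.Icc a b,
      HasDerivAt (fun s => -∫ x, ‖gradu s x‖ ^ 2 ∂μ)
        (-∫ x, 2 * ⟪gradu t x, gradLu t x⟫ ∂μ) t)
    -- positivity of I on [a,b]
    (hIpos : ∀ t ∈ Set.Icc a b, 0 < ∫ x, (u t x) ^ 2 ∂μ) :
    ∀ t ∈ Set.Icc a b,
      0 ≤ deriv (fun s =>
        (-∫ x, ‖gradu s x‖ ^ 2 ∂μ) / (∫ x, (u s x) ^ 2 ∂μ)) t :=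
  frequency_monotone_general μ a b u Lu gradu gradLu hu2 hLu2 huLu hibp hibp2 hDI hDD hIpos
end

section
/- Let $u$ be a smooth solution of $\partial_t u = \mathcal{L}_\phi u$ on a closed manifold $M$ for $t \in [a,b]$ whose frequency $U(t) = D(t)/I(t)$ is constant equal to $U$. Then $u(x,t) = e^{U(t-a)}\, u(x,a)$ for all $(x,t) \in M \times [a,b]$. -/
/-!
Constancy of the frequency gives `D = U₀ I` on `[a, b]`. Differentiating this identity and
integrating by parts twice yields `∫ (𝓛u)² = U₀² ∫ u²` and `∫ u 𝓛u = U₀ ∫ u²`, so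
`∫ (𝓛u - U₀ u)² = 0`: at each time, `𝓛u = U₀ u` almost everywhere. The exceptional null set
depends on the time, so Fubini (on a jointly measurable version of `u²`) is needed to conclude
that for almost every `x` the identity holds at almost every time. For such `x` the function
`e^{-2 U₀ t} u(t, x)²` has derivative zero almost everywhere, hence is constant by the fundamental
theorem of calculus; so `u(·, x)` vanishes identically or nowhere, and in the latter case
`e^{-U₀ t} u(t, x)` is constant as well.
-/

open MeasureTheory Filter Set Real
open scoped Topology RealInnerProductSpace

theorem HasDerivAt.eq_of_eqOn_Icc {f g : ℝ → ℝ} {f' g' a b s : ℝ} (hab : a < b)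
    (hs : s ∈ Icc a b) (hfg : EqOn f g (Icc a b)) (hf : HasDerivAt f f' s)
    (hg : HasDerivAt g g' s) : f' = g' :=
  (uniqueDiffOn_Icc hab s hs).eq_deriv _ hf.hasDerivWithinAt
    (hg.hasDerivWithinAt.congr hfg (hfg hs))

theorem tendsto_floor_mul_div_nat_add_one (s : ℝ) :
    Tendsto (fun n : ℕ => (⌊s * (n + 1)⌋ : ℝ) / (n + 1)) atTop (𝓝 s) := by
  have hlow : Tendsto (fun n : ℕ => s - 1 / ((n : ℝ) + 1)) atTop (𝓝 s) := by
    simpa using tendsto_one_div_add_atTop_nhds_zero_nat.const_sub s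
  refine tendsto_of_tendsto_of_tendsto_of_le_of_le hlow tendsto_const_nhds (fun n => ?_) fun n => ?_
  · have hn : (0 : ℝ) < n + 1 := by positivity
    rw [le_div_iff₀ hn, sub_mul, one_div_mul_cancel hn.ne']
    linarith [Int.sub_one_lt_floor (s * (n + 1))]
  · rw [div_le_iff₀ (by positivity)]
    exact Int.floor_le _

section

variable {M : Type*} [MeasurableSpace M] {μ : Measure M}

theorem ae_eq_const_mul_of_integral_mul_eq {f g : M → ℝ} {c : ℝ}
    (hf : Integrable (fun x => f x ^ 2) μ) (hg : Integrable (fun x => g x ^ 2) μ)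
    (hgf : Integrable (fun x => g x * f x) μ)
    (hmul : ∫ x, g x * f x ∂μ = c * ∫ x, g x ^ 2 ∂μ)
    (hsq : ∫ x, f x ^ 2 ∂μ = c ^ 2 * ∫ x, g x ^ 2 ∂μ) :
    ∀ᵐ x ∂μ, f x = c * g x := by
  have hexpand : (fun x => (f x - c * g x) ^ 2)
      = fun x => f x ^ 2 - 2 * c * (g x * f x) + c ^ 2 * g x ^ 2 := by
    ext x; ring
  have hcross : Integrable (fun x => f x ^ 2 - 2 * c * (g x * f x)) μ := hf.sub (hgf.const_mul _)
  have hint : Integrable (fun x => (f x - c * g x) ^ 2) μ := by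
    rw [hexpand]; exact hcross.add (hg.const_mul _)
  have hzero : ∫ x, (f x - c * g x) ^ 2 ∂μ = 0 := by
    rw [hexpand, integral_add hcross (hg.const_mul _), integral_sub hf (hgf.const_mul _),
      integral_const_mul, integral_const_mul, hmul, hsq]
    ring
  filter_upwards [(integral_eq_zero_iff_of_nonneg (fun x => sq_nonneg _) hint).1 hzero] with x hx
  simpa [sub_eq_zero] using hx

/-- Off the good set `G` the family is replaced by `0`, so that the grid approximations
`w (⌊s (n + 1)⌋ / (n + 1))` converge at every point and not only almost everywhere. -/
theorem exists_mem_ae_measurable_uncurry_indicator {w : ℝ → M → ℝ}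
    (hw : ∀ t, AEStronglyMeasurable (w t) μ) (hcont : ∀ x, Continuous fun t => w t x) :
    ∃ G ∈ ae μ, Measurable fun p : ℝ × M => G.indicator (w p.1) p.2 := by
  set grid : ℕ → ℤ → ℝ := fun n z => z / (n + 1)
  obtain ⟨G, hG_ae, hG, hGw⟩ : ∃ G ∈ ae μ, MeasurableSet G ∧
      ∀ x ∈ G, ∀ n z, w (grid n z) x = (hw (grid n z)).mk _ x :=
    (ae_all_iff.2 fun n => ae_all_iff.2 fun z => (hw (grid n z)).ae_eq_mk).exists_measurable_mem
  set v : ℕ → ℤ → M → ℝ := fun n z => G.indicator ((hw (grid n z)).mk _)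
  have hv : ∀ n z, Measurable (v n z) := fun n z =>
    (hw (grid n z)).stronglyMeasurable_mk.measurable.indicator hG
  refine ⟨G, hG_ae, measurable_of_tendsto_metrizable
    (f := fun n p => v n ⌊p.1 * ((n : ℝ) + 1)⌋ p.2) (fun n => ?_) (tendsto_pi_nhds.2 fun p => ?_)⟩
  · have hvn : Measurable fun q : M × ℤ => v n q.2 q.1 :=
      measurable_from_prod_countable_left fun z => hv n z
    exact hvn.comp (measurable_snd.prodMk (Int.measurable_floor.comp (measurable_fst.mul_const _)))
  · obtain ⟨s, x⟩ := p
    by_cases hx : x ∈ G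
    · simp only [v, indicator_of_mem hx, ← hGw x hx]
      exact ((hcont x).tendsto s).comp (tendsto_floor_mul_div_nat_add_one s)
    · simp only [v, indicator_of_notMem hx, tendsto_const_nhds]

theorem measurable_uncurry_indicator_of_hasDerivAt {w w' : ℝ → M → ℝ} {G : Set M}
    (hW : Measurable fun p : ℝ × M => G.indicator (w p.1) p.2)
    (hderiv : ∀ x s, HasDerivAt (fun r => w r x) (w' s x) s) :
    Measurable fun p : ℝ × M => G.indicator (w' p.1) p.2 := by
  have hshift : ∀ h : ℝ, Measurable fun p : ℝ × M => G.indicator (w (p.1 + h)) p.2 := fun h =>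
    hW.comp ((measurable_fst.add_const h).prodMk measurable_snd)
  refine measurable_of_tendsto_metrizable (f := fun n p => ((n : ℝ) + 1) *
      (G.indicator (w (p.1 + 1 / ((n : ℝ) + 1))) p.2 - G.indicator (w p.1) p.2))
    (fun n => measurable_const.mul ((hshift _).sub hW)) (tendsto_pi_nhds.2 fun p => ?_)
  obtain ⟨s, x⟩ := p
  by_cases hx : x ∈ G
  · have hstep : Tendsto (fun n : ℕ => s + 1 / ((n : ℝ) + 1)) atTop (𝓝[≠] s) := by
      refine tendsto_nhdsWithin_iff.2
        ⟨by simpa using tendsto_one_div_add_atTop_nhds_zero_nat.const_add s,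
          Eventually.of_forall fun n => ?_⟩
      simpa using Nat.cast_add_one_ne_zero n
    simp only [indicator_of_mem hx]
    refine (((hasDerivAt_iff_tendsto_slope.1 (hderiv x s)).comp hstep)).congr fun n => ?_
    simp only [Function.comp_apply, slope_def_field, add_sub_cancel_left]
    field_simp
  · simp only [indicator_of_notMem hx, sub_self, mul_zero, tendsto_const_nhds]

theorem ae_ae_restrict_deriv_eq_const_mul [SFinite μ] {w w' : ℝ → M → ℝ} {S : Set ℝ} {c : ℝ}
    (hS : MeasurableSet S) (hw : ∀ t, AEStronglyMeasurable (w t) μ)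
    (hderiv : ∀ x s, HasDerivAt (fun r => w r x) (w' s x) s)
    (hrel : ∀ s ∈ S, ∀ᵐ x ∂μ, w' s x = c * w s x) :
    ∀ᵐ x ∂μ, ∀ᵐ s ∂volume.restrict S, w' s x = c * w s x := by
  obtain ⟨G, hG_ae, hW⟩ :=
    exists_mem_ae_measurable_uncurry_indicator hw fun x => (continuous_iff_continuousAt.2
      fun s => (hderiv x s).continuousAt)
  have hW' := measurable_uncurry_indicator_of_hasDerivAt hW hderiv
  have hset : MeasurableSet {p : M × ℝ | G.indicator (w' p.2) p.1 = c * G.indicator (w p.2) p.1} :=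
    measurableSet_eq_fun (hW'.comp measurable_swap) ((hW.comp measurable_swap).const_mul c)
  have hswapped : ∀ᵐ s ∂volume.restrict S, ∀ᵐ x ∂μ,
      G.indicator (w' s) x = c * G.indicator (w s) x := by
    filter_upwards [ae_restrict_mem hS] with s hs
    filter_upwards [hrel s hs] with x hx
    by_cases hxG : x ∈ G <;> simp [hxG, hx]
  filter_upwards [(Measure.ae_ae_comm hset).2 hswapped, hG_ae] with x hx hxG
  simpa [hxG] using hx

end

theorem eq_of_hasDerivAt_of_ae_eq_zero {g g' : ℝ → ℝ} {a t : ℝ} (hat : a ≤ t)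
    (hg : ∀ s ∈ Icc a t, HasDerivAt g (g' s) s) (hg' : g' =ᵐ[volume.restrict (Ioc a t)] 0) :
    g t = g a := by
  have hftc := intervalIntegral.integral_eq_sub_of_hasDerivAt (by rwa [uIcc_of_le hat])
    ((intervalIntegrable_iff_integrableOn_Ioc_of_le hat).2 ((integrable_zero _ _ _).congr hg'.symm))
  rw [intervalIntegral.integral_of_le hat, integral_congr_ae hg', Pi.zero_def,
    integral_zero] at hftc
  linarith

theorem eq_exp_mul_of_ae_deriv_eq_mul {f f' : ℝ → ℝ} {a b c : ℝ}
    (hf : ∀ s ∈ Icc a b, HasDerivAt f (f' s) s)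
    (hf' : ∀ᵐ s ∂volume.restrict (Icc a b), f' s = c * f s) :
    ∀ t ∈ Icc a b, f t = exp (c * (t - a)) * f a := by
  intro t ht
  have hg : ∀ s ∈ Icc a t, HasDerivAt (fun r => exp (-(c * (r - a))) * f r)
      (exp (-(c * (s - a))) * (f' s - c * f s)) s := fun s hs => by
    have he : HasDerivAt (fun r => exp (-(c * (r - a)))) (exp (-(c * (s - a))) * -c) s := by
      simpa using (((hasDerivAt_id s).sub_const a).const_mul c).neg.exp
    exact (he.mul (hf s ⟨hs.1, hs.2.trans ht.2⟩)).congr_deriv (by ring)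
  have hconst := eq_of_hasDerivAt_of_ae_eq_zero ht.1 hg (by
    refine ae_restrict_of_ae_restrict_of_subset (Ioc_subset_Icc_self.trans
      (Icc_subset_Icc_right ht.2)) ?_
    filter_upwards [hf'] with s hs
    simp [hs])
  have hexp : exp (c * (t - a)) * exp (-(c * (t - a))) = 1 := by rw [← exp_add]; simp
  calc f t = exp (c * (t - a)) * (exp (-(c * (t - a))) * f t) := by rw [← mul_assoc, hexp, one_mul]
    _ = exp (c * (t - a)) * f a := by rw [hconst]; simp

theorem eq_exp_mul_of_ae_mul_deriv_eq_mul_sq {f f' : ℝ → ℝ} {a b c : ℝ}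
    (hf : ∀ s ∈ Icc a b, HasDerivAt f (f' s) s)
    (hf' : ∀ᵐ s ∂volume.restrict (Icc a b), f s * f' s = c * f s ^ 2) :
    ∀ t ∈ Icc a b, f t = exp (c * (t - a)) * f a := by
  have hsq := eq_exp_mul_of_ae_deriv_eq_mul (f := fun s => f s ^ 2)
    (f' := fun s => 2 * f s * f' s) (c := 2 * c)
    (fun s hs => ((hf s hs).fun_pow 2).congr_deriv (by ring))
    (by filter_upwards [hf'] with s hs; linear_combination 2 * hs)
  by_cases ha : f a = 0
  · intro t ht
    simpa [ha] using hsq t ht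
  have hne : ∀ s ∈ Icc a b, f s ≠ 0 := fun s hs hs0 => by
    simpa [hs0, ha, exp_ne_zero] using hsq s hs
  refine eq_exp_mul_of_ae_deriv_eq_mul hf ?_
  filter_upwards [hf', ae_restrict_mem measurableSet_Icc] with s hs hsI
  exact mul_left_cancel₀ (hne s hsI) (by rw [hs]; ring)

theorem frequency_constant_exponential_general
    {M : Type*} [MeasurableSpace M] (μ : Measure M) [IsFiniteMeasure μ]
    {V : Type*} [NormedAddCommGroup V] [InnerProductSpace ℝ V]
    (a b : ℝ)
    (u Lu : ℝ → M → ℝ) (gradu gradLu : ℝ → M → V)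
    (hu2 : ∀ t, Integrable (fun x => (u t x) ^ 2) μ)
    (hLu2 : ∀ t, Integrable (fun x => (Lu t x) ^ 2) μ)
    (huLu : ∀ t, Integrable (fun x => u t x * Lu t x) μ)
    -- the drift heat equation ∂ₜ u = 𝓛_φ u
    (hheat : ∀ x t, HasDerivAt (fun s => u s x) (Lu t x) t)
    -- self-adjointness of 𝓛_φ (integration by parts on the closed manifold)
    (hibp : ∀ t, ∫ x, u t x * Lu t x ∂μ = -∫ x, ‖gradu t x‖ ^ 2 ∂μ)
    (hibp2 : ∀ t, ∫ x, ⟪gradu t x, gradLu t x⟫ ∂μ = -∫ x, (Lu t x) ^ 2 ∂μ)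
    -- differentiation under the integral sign for I and D
    (hDI : ∀ t ∈ Set.Icc a b,
      HasDerivAt (fun s => ∫ x, (u s x) ^ 2 ∂μ)
        (∫ x, 2 * (u t x * Lu t x) ∂μ) t)
    (hDD : ∀ t ∈ Set.Icc a b,
      HasDerivAt (fun s => -∫ x, ‖gradu s x‖ ^ 2 ∂μ)
        (-∫ x, 2 * ⟪gradu t x, gradLu t x⟫ ∂μ) t)
    -- positivity of I on [a,b]
    (hIpos : ∀ t ∈ Set.Icc a b, 0 < ∫ x, (u t x) ^ 2 ∂μ)
    -- the frequency U = D/I is constant, equal to U₀, on [a,b]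
    (U₀ : ℝ)
    (hU : ∀ t ∈ Set.Icc a b,
      (-∫ x, ‖gradu t x‖ ^ 2 ∂μ) / (∫ x, (u t x) ^ 2 ∂μ) = U₀) :
    ∀ t ∈ Set.Icc a b, ∀ᵐ x ∂μ, u t x = Real.exp (U₀ * (t - a)) * u a x := by
  rcases le_or_gt b a with hba | hab
  · intro t ht
    obtain rfl : t = a := le_antisymm (ht.2.trans hba) ht.1
    simp
  have hD : ∀ s ∈ Icc a b, -∫ x, ‖gradu s x‖ ^ 2 ∂μ = U₀ * ∫ x, u s x ^ 2 ∂μ := fun s hs => by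
    rw [← hU s hs, div_mul_cancel₀ _ (hIpos s hs).ne']
  have hLu : ∀ s ∈ Icc a b, ∀ᵐ x ∂μ, Lu s x = U₀ * u s x := fun s hs => by
    have hD' := (hDD s hs).eq_of_eqOn_Icc hab hs hD ((hDI s hs).const_mul U₀)
    rw [integral_const_mul, integral_const_mul, hibp2, (hibp s).trans (hD s hs)] at hD'
    exact ae_eq_const_mul_of_integral_mul_eq (hLu2 s) (hu2 s) (huLu s)
      ((hibp s).trans (hD s hs)) (by linear_combination hD' / 2)
  -- Only `u t ^ 2`, not `u t`, is known to be measurable.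
  have hae := ae_ae_restrict_deriv_eq_const_mul (w := fun s x => u s x ^ 2)
    (w' := fun s x => 2 * (u s x * Lu s x)) (c := 2 * U₀) measurableSet_Icc
    (fun t => (hu2 t).aestronglyMeasurable)
    (fun x s => ((hheat x s).fun_pow 2).congr_deriv (by ring))
    (fun s hs => by filter_upwards [hLu s hs] with x hx; rw [hx]; ring)
  intro t ht
  filter_upwards [hae] with x hx
  refine eq_exp_mul_of_ae_mul_deriv_eq_mul_sq (fun s _ => hheat x s) ?_ t ht
  filter_upwards [hx] with s hs
  linarith

theorem frequency_constant_exponential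
    {M : Type*} [MeasurableSpace M] (μ : Measure M) [IsFiniteMeasure μ]
    {V : Type*} [NormedAddCommGroup V] [InnerProductSpace ℝ V]
    (a b : ℝ) (hab : a ≤ b)
    (u Lu : ℝ → M → ℝ) (gradu gradLu : ℝ → M → V)
    (hu2 : ∀ t, Integrable (fun x => (u t x) ^ 2) μ)
    (hgrad2 : ∀ t, Integrable (fun x => ‖gradu t x‖ ^ 2) μ)
    (hLu2 : ∀ t, Integrable (fun x => (Lu t x) ^ 2) μ)
    (huLu : ∀ t, Integrable (fun x => u t x * Lu t x) μ)
    (hgg : ∀ t, Integrable (fun x => ⟪gradu t x, gradLu t x⟫) μ)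
    -- the drift heat equation ∂ₜ u = 𝓛_φ u
    (hheat : ∀ x t, HasDerivAt (fun s => u s x) (Lu t x) t)
    -- self-adjointness of 𝓛_φ (integration by parts on the closed manifold)
    (hibp : ∀ t, ∫ x, u t x * Lu t x ∂μ = -∫ x, ‖gradu t x‖ ^ 2 ∂μ)
    (hibp2 : ∀ t, ∫ x, ⟪gradu t x, gradLu t x⟫ ∂μ = -∫ x, (Lu t x) ^ 2 ∂μ)
    -- differentiation under the integral sign for I and D
    (hDI : ∀ t ∈ Set.Icc a b,
      HasDerivAt (fun s => ∫ x, (u s x) ^ 2 ∂μ)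
        (∫ x, 2 * (u t x * Lu t x) ∂μ) t)
    (hDD : ∀ t ∈ Set.Icc a b,
      HasDerivAt (fun s => -∫ x, ‖gradu s x‖ ^ 2 ∂μ)
        (-∫ x, 2 * ⟪gradu t x, gradLu t x⟫ ∂μ) t)
    -- positivity of I on [a,b]
    (hIpos : ∀ t ∈ Set.Icc a b, 0 < ∫ x, (u t x) ^ 2 ∂μ)
    -- the frequency U = D/I is constant, equal to U₀, on [a,b]
    (U₀ : ℝ)
    (hU : ∀ t ∈ Set.Icc a b,
      (-∫ x, ‖gradu t x‖ ^ 2 ∂μ) / (∫ x, (u t x) ^ 2 ∂μ) = U₀) :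
    ∀ t ∈ Set.Icc a b, ∀ᵐ x ∂μ, u t x = Real.exp (U₀ * (t - a)) * u a x :=
  frequency_constant_exponential_general μ a b u Lu gradu gradLu hu2 hLu2 huLu hheat hibp hibp2 hDI
    hDD hIpos U₀ hU
end

section
/- Backward uniqueness: let $u$ be a smooth solution of $\partial_t u = \mathcal{L}_\phi u$ on a closed Riemannian manifold $M$ for $t \in [a,b]$. If $u(\cdot, b) \equiv 0$, then $u \equiv 0$ on $M \times [a,b]$. -/
/-!
Let `I(t) = ∫ u² dμ`. Then `I' = 2J` with `J = ∫ u 𝓛u = -∫ |∇u|²`, and `J' = 2E` with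
`E = ∫ (𝓛u)²`. By Cauchy–Schwarz `J² ≤ I E`, so wherever `I > 0` the frequency `J / I` is
nondecreasing, i.e. `log I` is convex, and `I(t) ≥ I(t₀) e^{2 (J/I)(t₀) (t - t₀)}` for `t ≥ t₀`.
If `I(t₀) > 0` for some `t₀ ∈ [a, b]`, this lower bound stays positive up to the first zero of `I`
after `t₀`, which exists because `I(b) = 0`: a contradiction.
-/

open MeasureTheory Set Real
open scoped RealInnerProductSpace

theorem sq_integral_mul_le_integral_sq_mul_integral_sq {α : Type*} [MeasurableSpace α]
    {μ : Measure α} {f g : α → ℝ} (hf : Integrable (fun x => f x ^ 2) μ)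
    (hg : Integrable (fun x => g x ^ 2) μ) (hfg : Integrable (fun x => f x * g x) μ) :
    (∫ x, f x * g x ∂μ) ^ 2 ≤ (∫ x, f x ^ 2 ∂μ) * ∫ x, g x ^ 2 ∂μ := by
  have hquad : ∀ r : ℝ,
      0 ≤ (∫ x, g x ^ 2 ∂μ) * (r * r) + 2 * (∫ x, f x * g x ∂μ) * r + ∫ x, f x ^ 2 ∂μ := by
    intro r
    have hexp : (fun x => (r * g x + f x) ^ 2)
        = fun x => r * r * g x ^ 2 + (2 * r * (f x * g x) + f x ^ 2) := by
      funext x; ring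
    have h0 : 0 ≤ ∫ x, (r * g x + f x) ^ 2 ∂μ := integral_nonneg fun x => sq_nonneg _
    have hmixed : Integrable (fun x => 2 * r * (f x * g x)) μ := hfg.const_mul _
    have hrest : Integrable (fun x => 2 * r * (f x * g x) + f x ^ 2) μ := hmixed.add hf
    rw [hexp, integral_add (hg.const_mul _) hrest, integral_add hmixed hf,
      integral_const_mul, integral_const_mul] at h0
    linarith
  have := discrim_le_zero hquad
  rw [discrim] at this
  nlinarith

theorem ContinuousOn.exists_first_zero {α β : Type*} [ConditionallyCompleteLinearOrder α]
    [TopologicalSpace α] [OrderTopology α] [Zero β] [TopologicalSpace β] [T1Space β]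
    {f : α → β} {a b : α} (hf : ContinuousOn f (Icc a b)) (hab : a ≤ b) (ha : f a ≠ 0)
    (hb : f b = 0) : ∃ c ∈ Ioc a b, f c = 0 ∧ ∀ t ∈ Ico a c, f t ≠ 0 := by
  set S := Icc a b ∩ f ⁻¹' {0}
  have hS : IsClosed S := hf.preimage_isClosed_of_isClosed isClosed_Icc isClosed_singleton
  have hSbdd : BddBelow S := ⟨a, fun t ht => ht.1.1⟩
  obtain ⟨⟨hac, hcb⟩, hc⟩ : sInf S ∈ S := hS.csInf_mem ⟨b, ⟨hab, le_rfl⟩, hb⟩ hSbdd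
  refine ⟨sInf S, ⟨hac.lt_of_ne ?_, hcb⟩, hc, fun t ht hft => ?_⟩
  · rintro hca
    exact ha (hca ▸ hc)
  · exact ht.2.not_ge (csInf_le hSbdd ⟨⟨ht.1, ht.2.le.trans hcb⟩, hft⟩)

theorem monotoneOn_of_hasDerivAt_nonneg {D : Set ℝ} (hD : Convex ℝ D) {f f' : ℝ → ℝ}
    (hf : ∀ x ∈ D, HasDerivAt f (f' x) x) (hf' : ∀ x ∈ D, 0 ≤ f' x) : MonotoneOn f D :=
  monotoneOn_of_deriv_nonneg hD (fun x hx => (hf x hx).continuousAt.continuousWithinAt)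
    (fun x hx => (hf x (interior_subset hx)).differentiableAt.differentiableWithinAt)
    fun x hx => by
      rw [(hf x (interior_subset hx)).deriv]
      exact hf' x (interior_subset hx)

section LogConvex

variable {I J E : ℝ → ℝ} {D : Set ℝ}

theorem monotoneOn_div_of_sq_le_mul (hD : Convex ℝ D)
    (hI : ∀ t ∈ D, HasDerivAt I (2 * J t) t) (hJ : ∀ t ∈ D, HasDerivAt J (2 * E t) t)
    (hCS : ∀ t ∈ D, J t ^ 2 ≤ I t * E t) (hpos : ∀ t ∈ D, 0 < I t) :
    MonotoneOn (fun t => J t / I t) D := by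
  refine monotoneOn_of_hasDerivAt_nonneg hD
    (fun t ht => (hJ t ht).div (hI t ht) (hpos t ht).ne') fun t ht => ?_
  have := hCS t ht
  have := hpos t ht
  apply div_nonneg _ (sq_nonneg _)
  nlinarith

theorem mul_exp_le_of_sq_le_mul (hD : Convex ℝ D)
    (hI : ∀ t ∈ D, HasDerivAt I (2 * J t) t) (hJ : ∀ t ∈ D, HasDerivAt J (2 * E t) t)
    (hCS : ∀ t ∈ D, J t ^ 2 ≤ I t * E t) (hpos : ∀ t ∈ D, 0 < I t)
    {s t : ℝ} (hs : s ∈ D) (ht : t ∈ D) (hst : s ≤ t) :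
    I s * exp (2 * (J s / I s) * (t - s)) ≤ I t := by
  have hsub : Icc s t ⊆ D := hD.ordConnected.out hs ht
  have hfreq := monotoneOn_div_of_sq_le_mul hD hI hJ hCS hpos
  have hmono : MonotoneOn (fun r => log (I r) - 2 * (J s / I s) * r) (Icc s t) := by
    refine monotoneOn_of_hasDerivAt_nonneg (convex_Icc s t)
      (fun r hr => ((hI r (hsub hr)).log (hpos r (hsub hr)).ne').sub
        ((hasDerivAt_id r).const_mul _)) fun r hr => ?_
    have := hfreq hs (hsub hr) hr.1
    simp only [mul_one, mul_div_assoc, sub_nonneg]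
    linarith
  have hlog := hmono (left_mem_Icc.2 hst) (right_mem_Icc.2 hst) hst
  calc I s * exp (2 * (J s / I s) * (t - s))
      = exp (log (I s) + 2 * (J s / I s) * (t - s)) := by
        rw [exp_add, exp_log (hpos s hs)]
    _ ≤ exp (log (I t)) := exp_le_exp.2 (by simp only at hlog; linarith)
    _ = I t := exp_log (hpos t ht)

theorem eqOn_zero_of_sq_le_mul {a b : ℝ}
    (hI : ∀ t ∈ Icc a b, HasDerivAt I (2 * J t) t) (hJ : ∀ t ∈ Icc a b, HasDerivAt J (2 * E t) t)
    (hCS : ∀ t ∈ Icc a b, J t ^ 2 ≤ I t * E t) (hI0 : ∀ t ∈ Icc a b, 0 ≤ I t) (hIb : I b = 0) :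
    EqOn I 0 (Icc a b) := by
  intro t₀ ht₀
  by_contra hne
  have hcont : ContinuousOn I (Icc a b) := fun t ht => (hI t ht).continuousAt.continuousWithinAt
  obtain ⟨c, ⟨ht₀c, hcb⟩, hIc, hIne⟩ := (hcont.mono (Icc_subset_Icc_left ht₀.1)).exists_first_zero
    ht₀.2 hne hIb
  have hsub : Icc t₀ c ⊆ Icc a b := Icc_subset_Icc ht₀.1 hcb
  have hpos : ∀ t ∈ Ico t₀ c, 0 < I t := fun t ht =>
    (hI0 t (hsub (Ico_subset_Icc_self ht))).lt_of_ne' (hIne t ht)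
  have hsubIco : Ico t₀ c ⊆ Icc a b := Ico_subset_Icc_self.trans hsub
  have hlow : ∀ t ∈ Ico t₀ c, I t₀ * exp (2 * (J t₀ / I t₀) * (t - t₀)) ≤ I t :=
    fun t ht => mul_exp_le_of_sq_le_mul (convex_Ico t₀ c) (fun r hr => hI r (hsubIco hr))
      (fun r hr => hJ r (hsubIco hr)) (fun r hr => hCS r (hsubIco hr)) hpos
      (left_mem_Ico.2 ht₀c) ht ht.1
  have hlim : I t₀ * exp (2 * (J t₀ / I t₀) * (c - t₀)) ≤ I c := by
    refine le_on_closure hlow (by fun_prop) (closure_Ico ht₀c.ne ▸ hcont.mono hsub) ?_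
    rw [closure_Ico ht₀c.ne]
    exact right_mem_Icc.2 ht₀c.le
  rw [hIc] at hlim
  exact hlim.not_gt (mul_pos (hpos t₀ (left_mem_Ico.2 ht₀c)) (exp_pos _))

end LogConvex

theorem backward_uniqueness_general
    {M : Type*} [MeasurableSpace M] (μ : Measure M)
    {V : Type*} [NormedAddCommGroup V] [InnerProductSpace ℝ V]
    (a b : ℝ)
    (u Lu : ℝ → M → ℝ) (gradu gradLu : ℝ → M → V)
    (hu2 : ∀ t, Integrable (fun x => (u t x) ^ 2) μ)
    (hLu2 : ∀ t, Integrable (fun x => (Lu t x) ^ 2) μ)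
    (huLu : ∀ t, Integrable (fun x => u t x * Lu t x) μ)
    -- self-adjointness of 𝓛_φ (integration by parts on the closed manifold)
    (hibp : ∀ t, ∫ x, u t x * Lu t x ∂μ = -∫ x, ‖gradu t x‖ ^ 2 ∂μ)
    (hibp2 : ∀ t, ∫ x, ⟪gradu t x, gradLu t x⟫ ∂μ = -∫ x, (Lu t x) ^ 2 ∂μ)
    -- differentiation under the integral sign for I and D
    (hDI : ∀ t ∈ Set.Icc a b,
      HasDerivAt (fun s => ∫ x, (u s x) ^ 2 ∂μ)
        (∫ x, 2 * (u t x * Lu t x) ∂μ) t)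
    (hDD : ∀ t ∈ Set.Icc a b,
      HasDerivAt (fun s => -∫ x, ‖gradu s x‖ ^ 2 ∂μ)
        (-∫ x, 2 * ⟪gradu t x, gradLu t x⟫ ∂μ) t)
    -- u vanishes at the final time b
    (hb : ∀ x, u b x = 0) :
    ∀ t ∈ Set.Icc a b, ∀ᵐ x ∂μ, u t x = 0 := by
  set I : ℝ → ℝ := fun t => ∫ x, u t x ^ 2 ∂μ
  set J : ℝ → ℝ := fun t => ∫ x, u t x * Lu t x ∂μ
  have hI : ∀ t ∈ Icc a b, HasDerivAt I (2 * J t) t := fun t ht => by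
    simpa only [integral_const_mul] using hDI t ht
  have hJ : ∀ t ∈ Icc a b, HasDerivAt J (2 * ∫ x, Lu t x ^ 2 ∂μ) t := fun t ht => by
    rw [show J = fun s => -∫ x, ‖gradu s x‖ ^ 2 ∂μ from funext hibp]
    convert hDD t ht using 1
    rw [integral_const_mul, hibp2]
    ring
  have hIzero : EqOn I 0 (Icc a b) := eqOn_zero_of_sq_le_mul hI hJ
    (fun t _ => sq_integral_mul_le_integral_sq_mul_integral_sq (hu2 t) (hLu2 t) (huLu t))
    (fun t _ => integral_nonneg fun x => sq_nonneg _) (by simp [I, hb])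
  intro t ht
  filter_upwards [(integral_eq_zero_iff_of_nonneg (fun x => sq_nonneg (u t x)) (hu2 t)).1
    (hIzero ht)] with x hx
  exact pow_eq_zero_iff two_ne_zero |>.1 hx

theorem backward_uniqueness
    {M : Type*} [MeasurableSpace M] (μ : Measure M) [IsFiniteMeasure μ]
    {V : Type*} [NormedAddCommGroup V] [InnerProductSpace ℝ V]
    (a b : ℝ) (hab : a ≤ b)
    (u Lu : ℝ → M → ℝ) (gradu gradLu : ℝ → M → V)
    (hu2 : ∀ t, Integrable (fun x => (u t x) ^ 2) μ)
    (hgrad2 : ∀ t, Integrable (fun x => ‖gradu t x‖ ^ 2) μ)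
    (hLu2 : ∀ t, Integrable (fun x => (Lu t x) ^ 2) μ)
    (huLu : ∀ t, Integrable (fun x => u t x * Lu t x) μ)
    (hgg : ∀ t, Integrable (fun x => ⟪gradu t x, gradLu t x⟫) μ)
    -- the drift heat equation ∂ₜ u = 𝓛_φ u
    (hheat : ∀ x t, HasDerivAt (fun s => u s x) (Lu t x) t)
    -- self-adjointness of 𝓛_φ (integration by parts on the closed manifold)
    (hibp : ∀ t, ∫ x, u t x * Lu t x ∂μ = -∫ x, ‖gradu t x‖ ^ 2 ∂μ)
    (hibp2 : ∀ t, ∫ x, ⟪gradu t x, gradLu t x⟫ ∂μ = -∫ x, (Lu t x) ^ 2 ∂μ)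
    -- differentiation under the integral sign for I and D
    (hDI : ∀ t ∈ Set.Icc a b,
      HasDerivAt (fun s => ∫ x, (u s x) ^ 2 ∂μ)
        (∫ x, 2 * (u t x * Lu t x) ∂μ) t)
    (hDD : ∀ t ∈ Set.Icc a b,
      HasDerivAt (fun s => -∫ x, ‖gradu s x‖ ^ 2 ∂μ)
        (-∫ x, 2 * ⟪gradu t x, gradLu t x⟫ ∂μ) t)
    -- u vanishes at the final time b
    (hb : ∀ x, u b x = 0) :
    ∀ t ∈ Set.Icc a b, ∀ᵐ x ∂μ, u t x = 0 :=
  backward_uniqueness_general μ a b u Lu gradu gradLu hu2 hLu2 huLu hibp hibp2 hDI hDD hb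
end
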